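/- arXiv:1709.03867 — 2 statements merged into one kernel-verified Lean document; each statement's English description precedes it below -/
import Mathlib

section
/- Define A(α) = (ln((2 - α)/(1 - α)) + 1)·(1 - α) + α and B(α) = 2α. There exists a unique α* ∈ (1/2, 1) with A(α*) = B(α*), and A(α*) < 1.43. -/
/-!
The difference `A(α) - 2α` has derivative `1/(2-α) - log((2-α)/(1-α)) - 2 < -1` on `α < 1`, so it
is strictly decreasing there and vanishes at most once. It is positive at `α = 0.6` and negative at
`α = 0.715`, so it has a root `α*` between them, and `A(α*) = 2α* < 2 · 0.715 = 1.43`.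
-/

open Real Set

noncomputable def greedyBound (α : ℝ) : ℝ :=
  (log ((2 - α) / (1 - α)) + 1) * (1 - α) + α

lemma hasDerivAt_greedyBound {x : ℝ} (hx : x < 1) :
    HasDerivAt greedyBound (1 / (2 - x) - log ((2 - x) / (1 - x))) x := by
  have h1 : 1 - x ≠ 0 := by linarith
  have h2 : 2 - x ≠ 0 := by linarith
  have hv : HasDerivAt (fun y : ℝ => 1 - y) (-1) x := (hasDerivAt_id x).const_sub 1
  have hlog : HasDerivAt (fun y => log ((2 - y) / (1 - y)))
      ((-1 * (1 - x) - (2 - x) * -1) / (1 - x) ^ 2 / ((2 - x) / (1 - x))) x :=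
    (((hasDerivAt_id' x).const_sub 2).div hv h1).log (div_ne_zero h2 h1)
  refine (((hlog.add_const 1).mul hv).add (hasDerivAt_id' x)).congr_deriv ?_
  field_simp
  ring

lemma continuousOn_greedyBound : ContinuousOn greedyBound (Iio 1) := fun _ hx =>
  (hasDerivAt_greedyBound hx).continuousAt.continuousWithinAt

lemma strictAntiOn_greedyBound_sub_two_mul :
    StrictAntiOn (fun α => greedyBound α - 2 * α) (Iio 1) := by
  refine strictAntiOn_of_deriv_neg (convex_Iio 1)
    (continuousOn_greedyBound.sub (continuous_const.mul continuous_id).continuousOn) ?_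
  intro x hx
  rw [interior_Iio, mem_Iio] at hx
  have hderiv : HasDerivAt (fun α => greedyBound α - 2 * α)
      (1 / (2 - x) - log ((2 - x) / (1 - x)) - 2 * 1) x :=
    (hasDerivAt_greedyBound hx).sub ((hasDerivAt_id' x).const_mul 2)
  rw [hderiv.deriv]
  have hlog : 0 ≤ log ((2 - x) / (1 - x)) :=
    log_nonneg ((one_le_div (by linarith)).mpr (by linarith))
  have hinv : 1 / (2 - x) < 1 := (div_lt_one (by linarith)).mpr (by linarith)
  linarith

lemma two_mul_lt_greedyBound_0_6 : 2 * 0.6 < greedyBound 0.6 := by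
  have hlog : log 2 < log ((2 - 0.6) / (1 - 0.6)) := log_lt_log two_pos (by norm_num)
  unfold greedyBound
  linarith [log_two_gt_d9]

lemma greedyBound_lt_two_mul_0_715 : greedyBound 0.715 < 2 * 0.715 := by
  -- `(2 - 0.715) / (1 - 0.715) = 257 / 57`, and the claim is `log (257 / 57) < 86 / 57`, a margin
  -- of about `0.003` that the degree-6 Taylor polynomial of `exp` already certifies.
  have hexp : (257 : ℝ) / 57 < exp (86 / 57) := by
    refine lt_of_lt_of_le ?_ (sum_le_exp_of_nonneg (by norm_num) 7)
    norm_num [Finset.sum_range_succ, Nat.factorial]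
  have hlog : log ((2 - 0.715) / (1 - 0.715)) < 86 / 57 := by
    rw [log_lt_iff_lt_exp (by norm_num)]
    norm_num [hexp]
  unfold greedyBound
  linarith

lemma exists_greedyBound_eq_two_mul :
    ∃ α ∈ Ioo (0.6 : ℝ) 0.715, greedyBound α = 2 * α := by
  have hcont : ContinuousOn (fun α => greedyBound α - 2 * α) (Icc 0.6 0.715) :=
    (continuousOn_greedyBound.sub (continuous_const.mul continuous_id).continuousOn).mono
      fun x hx => mem_Iio.mpr (by linarith [hx.2])
  obtain ⟨α, hα, hroot⟩ := intermediate_value_Ioo' (by norm_num) hcont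
    ⟨sub_neg.mpr greedyBound_lt_two_mul_0_715, sub_pos.mpr two_mul_lt_greedyBound_0_6⟩
  exact ⟨α, hα, sub_eq_zero.mp hroot⟩

theorem crossing_point :
    (∃! α : ℝ, α ∈ Set.Ioo (1/2 : ℝ) 1 ∧
      (Real.log ((2 - α) / (1 - α)) + 1) * (1 - α) + α = 2 * α) ∧
    (∀ α ∈ Set.Ioo (1/2 : ℝ) 1,
      (Real.log ((2 - α) / (1 - α)) + 1) * (1 - α) + α = 2 * α →
      (Real.log ((2 - α) / (1 - α)) + 1) * (1 - α) + α < 1.43) := by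
  have hanti := strictAntiOn_greedyBound_sub_two_mul
  obtain ⟨c, hc, hroot⟩ := exists_greedyBound_eq_two_mul
  have hc1 : c < 1 := by linarith [hc.2]
  refine ⟨⟨c, ⟨⟨by linarith [hc.1], hc1⟩, hroot⟩, fun y ⟨hy, hyroot⟩ => ?_⟩, fun α hα hA => ?_⟩
  · change greedyBound y = 2 * y at hyroot
    exact hanti.injOn hy.2 hc1 (by simp only [hyroot, hroot, sub_self])
  · change greedyBound α = 2 * α at hA
    have hlt : α < 0.715 := (hanti.lt_iff_gt (show (0.715 : ℝ) ∈ Iio 1 by norm_num) hα.2).mp <| by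
      simp only [hA, sub_self]
      linarith [greedyBound_lt_two_mul_0_715]
    change greedyBound α < 1.43
    linarith
end

section
/- Define A(α) = (ln((2 - α)/(1 - α)) + 1)·(1 - α) + α and B(α) = 2α for α ∈ (1/2, 1). Then max over α ∈ (1/2,1) of min(A(α), B(α)) is less than 1.43. -/
/-! With `t = 1 - α`, the first term of the minimum is `1 + t log ((1 + t) / t)`. The tangent line
of `log` at `exp (3/2)` bounds it by `1 + (1 + t) / exp (3/2) + t / 2`, which is below `1.43` once
`α ≥ 0.7145`; for smaller `α` the second term `2α` is already below `1.43`. -/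

open Real

lemma Real.log_le_div_exp_add_sub_one (c : ℝ) {x : ℝ} (hx : 0 < x) :
    log x ≤ x / exp c + c - 1 := by
  have h := log_le_sub_one_of_pos (div_pos hx (exp_pos c))
  rw [log_div hx.ne' (exp_ne_zero c), log_exp] at h
  linarith

lemma Real.exp_three_halves_ge : (4.48 : ℝ) ≤ exp (3 / 2) := by
  have hsq : exp (3 / 2) ^ 2 = exp 1 ^ 3 := by
    rw [← exp_nat_mul, ← exp_nat_mul]; norm_num
  have he := exp_one_gt_d9
  refine le_of_pow_le_pow_left₀ two_ne_zero (exp_pos _).le ?_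
  rw [hsq]
  calc (4.48 : ℝ) ^ 2 ≤ 2.7182818283 ^ 3 := by norm_num
    _ ≤ exp 1 ^ 3 := by gcongr

lemma log_two_sub_div_one_sub_add_one_mul_add_le {α : ℝ} (hα : α < 1) :
    (log ((2 - α) / (1 - α)) + 1) * (1 - α) + α ≤ (2 - α) / 4.48 + (1 - α) / 2 + 1 := by
  have ht : 0 < 1 - α := by linarith
  have tangent := log_le_div_exp_add_sub_one (3 / 2) (div_pos (by linarith : 0 < 2 - α) ht)
  have hexp : (2 - α) / exp (3 / 2) ≤ (2 - α) / 4.48 :=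
    div_le_div_of_nonneg_left (by linarith) (by norm_num) exp_three_halves_ge
  have hcancel : (2 - α) / (1 - α) / exp (3 / 2) * (1 - α) = (2 - α) / exp (3 / 2) := by
    field_simp
  nlinarith [mul_le_mul_of_nonneg_right tangent ht.le]

theorem sup_min_lt :
    sSup {x : ℝ | ∃ α ∈ Set.Ioo (1/2 : ℝ) 1,
      x = min ((Real.log ((2 - α) / (1 - α)) + 1) * (1 - α) + α) (2 * α)} < 1.43 := by
  suffices h : sSup {x : ℝ | ∃ α ∈ Set.Ioo (1/2 : ℝ) 1,
      x = min ((Real.log ((2 - α) / (1 - α)) + 1) * (1 - α) + α) (2 * α)} ≤ 1.4297 by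
    linarith
  refine Real.sSup_le ?_ (by norm_num)
  rintro x ⟨α, ⟨-, hα1⟩, rfl⟩
  rcases le_or_gt α 0.7145 with hα | hα
  · exact (min_le_right _ _).trans (by linarith)
  · refine (min_le_left _ _).trans ((log_two_sub_div_one_sub_add_one_mul_add_le hα1).trans ?_)
    rw [div_eq_mul_inv _ (4.48 : ℝ)]
    norm_num
    linarith
end
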